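/- (Weak–strong closedness of subdifferentials under the limit α ↘ 0.) Let (α_n) ⊂ (0,1) with α_n → 0. Suppose (β_n) ⊂ L²(Q) converges weakly in L²(Q) to β, (φ_n) ⊂ L²(Q) converges strongly in L²(Q) to φ, and β_n ∈ ∂E_{sg,α_n}(φ_n) for every n. Then β ∈ ∂I_K(φ); that is, |φ| ≤ 1 a.e. in Q and ⟨β, ψ − φ⟩ ≤ 0 for every ψ ∈ L²(Q) with |ψ| ≤ 1 a.e. in Q. -/

import Mathlib

/-!
Finiteness of `E_{sg,αₙ}(φₙ)` forces `|φₙ| ≤ 1 + αₙ` a.e., and these bounds pass to an a.e.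
convergent subsequence of `φₙ → φ`, so `|φ| ≤ 1`. For `|ψ| ≤ 1` one has `E_{sg,αₙ}(ψ) = O(αₙ)`
because `x log x ≤ 3 log 3` on `[0, 3]`, so the subdifferential inequality gives
`⟨βₙ, ψ - φₙ⟩ ≤ O(αₙ)`. By Banach–Steinhaus the weakly convergent `βₙ` are bounded, hence the
weak–strong pairing `⟨βₙ, ψ - φₙ⟩` tends to `⟨β, ψ - φ⟩`, which is therefore `≤ 0`.
-/

open MeasureTheory Filter Set Classical
open scoped ENNReal

/-- The logarithmic potential `W_{sg,α}(s) = α((1+α+s)log(1+α+s) + (1+α−s)log(1+α−s))`.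
(In Mathlib, `Real.log 0 = 0`, so the convention `0·log 0 = 0` holds automatically.) -/
noncomputable def Wsg (α s : ℝ) : ℝ :=
  α * ((1 + α + s) * Real.log (1 + α + s) + (1 + α - s) * Real.log (1 + α - s))

/-- The Lebesgue measure restricted to `Q = Ω × (0,T')`. -/
noncomputable def Qmeasure (Ω : Set (EuclideanSpace ℝ (Fin 3))) (T' : ℝ) :
    Measure (EuclideanSpace ℝ (Fin 3) × ℝ) :=
  volume.restrict (Ω ×ˢ Set.Ioo 0 T')

/-- The functional `E_{sg,α} : L²(Q) → [0,∞]`, equal to `∫_Q W_{sg,α}(φ)` if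
`|φ| ≤ 1+α` a.e. in `Q`, and `+∞` otherwise. -/
noncomputable def Esg {X : Type*} [MeasurableSpace X] (μ : Measure X) (α : ℝ)
    (φ : X → ℝ) : ℝ≥0∞ :=
  if ∀ᵐ x ∂μ, |φ x| ≤ 1 + α then ∫⁻ x, ENNReal.ofReal (Wsg α (φ x)) ∂μ else ⊤

/-- The indicator functional `I_K` of `K = {φ ∈ L²(Q) : |φ| ≤ 1 a.e.}`. -/
noncomputable def IK {X : Type*} [MeasurableSpace X] (μ : Measure X)
    (φ : X → ℝ) : ℝ≥0∞ :=
  if ∀ᵐ x ∂μ, |φ x| ≤ 1 then 0 else ⊤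

/-- `ξ` belongs to the subdifferential `∂F(φ)` of a functional
`F : L²(μ) → [0,∞]` at `φ`: `F(φ) < ∞` and `⟨ξ, ψ − φ⟩ + F(φ) ≤ F(ψ)` for all
`ψ ∈ L²(μ)` (the inequality is trivial whenever `F(ψ) = ∞`). -/
def MemSubdiff {X : Type*} [MeasurableSpace X] (μ : Measure X)
    (F : (X → ℝ) → ℝ≥0∞) (φ ξ : X → ℝ) : Prop :=
  MemLp ξ 2 μ ∧ F φ ≠ ⊤ ∧
    ∀ ψ : X → ℝ, MemLp ψ 2 μ → F ψ ≠ ⊤ →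
      (∫ x, ξ x * (ψ x - φ x) ∂μ) + (F φ).toReal ≤ (F ψ).toReal

theorem tendsto_apply_of_tendsto_pointwise {𝕜 E F : Type*} [NontriviallyNormedField 𝕜]
    [NormedAddCommGroup E] [NormedSpace 𝕜 E] [CompleteSpace E]
    [NormedAddCommGroup F] [NormedSpace 𝕜 F]
    {g : ℕ → E →L[𝕜] F} {ℓ : E → F} (hg : ∀ y, Tendsto (fun n => g n y) atTop (nhds (ℓ y)))
    {x : ℕ → E} {x₀ : E} (hx : Tendsto x atTop (nhds x₀)) :
    Tendsto (fun n => g n (x n)) atTop (nhds (ℓ x₀)) := by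
  obtain ⟨C, hC⟩ := banach_steinhaus fun y => by
    obtain ⟨c, hc⟩ := (hg y).norm.bddAbove_range
    exact ⟨c, fun n => hc (mem_range_self n)⟩
  have herr : Tendsto (fun n => g n (x n - x₀)) atTop (nhds 0) := by
    refine squeeze_zero_norm (fun n => (g n).le_of_opNorm_le (hC n) _) ?_
    simpa using (tendsto_sub_nhds_zero_iff.mpr hx).norm.const_mul C
  simpa [map_sub] using (hg x₀).add herr

theorem mul_log_le_mul_log_of_le {x a : ℝ} (hx : 0 ≤ x) (hxa : x ≤ a) (ha : 1 ≤ a) :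
    x * Real.log x ≤ a * Real.log a := by
  have hloga : 0 ≤ Real.log a := Real.log_nonneg ha
  rcases le_or_gt x 1 with hx1 | hx1
  · exact (mul_nonpos_of_nonneg_of_nonpos hx (Real.log_nonpos hx hx1)).trans
      (mul_nonneg (by linarith) hloga)
  · exact mul_le_mul hxa (Real.log_le_log (by linarith) hxa)
      (Real.log_nonneg hx1.le) (by linarith)

theorem Wsg_le_of_abs_le_one {α s : ℝ} (hα0 : 0 ≤ α) (hα1 : α ≤ 1) (hs : |s| ≤ 1) :
    Wsg α s ≤ 6 * Real.log 3 * α := by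
  obtain ⟨hs₁, hs₂⟩ := abs_le.mp hs
  have h_add := mul_log_le_mul_log_of_le (x := 1 + α + s) (a := 3) (by linarith) (by linarith)
    (by norm_num)
  have h_sub := mul_log_le_mul_log_of_le (x := 1 + α - s) (a := 3) (by linarith) (by linarith)
    (by norm_num)
  unfold Wsg
  nlinarith

section

variable {X : Type*} [MeasurableSpace X] {μ : Measure X}

theorem ae_abs_le_of_Esg_ne_top {α : ℝ} {φ : X → ℝ} (h : Esg μ α φ ≠ ⊤) :
    ∀ᵐ x ∂μ, |φ x| ≤ 1 + α := by
  by_contra hφ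
  exact h (if_neg hφ)

theorem Esg_le_of_ae_abs_le_one [IsFiniteMeasure μ] {α : ℝ} (hα0 : 0 ≤ α) (hα1 : α ≤ 1)
    {ψ : X → ℝ} (hψ : ∀ᵐ x ∂μ, |ψ x| ≤ 1) :
    Esg μ α ψ ≤ ENNReal.ofReal (6 * Real.log 3 * α * μ.real univ) := by
  have hψα : ∀ᵐ x ∂μ, |ψ x| ≤ 1 + α := hψ.mono fun x hx => by linarith
  rw [Esg, if_pos hψα, ENNReal.ofReal_mul' measureReal_nonneg, ofReal_measureReal]
  calc ∫⁻ x, ENNReal.ofReal (Wsg α (ψ x)) ∂μ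
      ≤ ∫⁻ _, ENNReal.ofReal (6 * Real.log 3 * α) ∂μ :=
        lintegral_mono_ae <| hψ.mono fun x hx =>
          ENNReal.ofReal_le_ofReal (Wsg_le_of_abs_le_one hα0 hα1 hx)
    _ = _ := lintegral_const _

theorem MemSubdiff.integral_mul_sub_le {F : (X → ℝ) → ℝ≥0∞} {φ ξ ψ : X → ℝ}
    (h : MemSubdiff μ F φ ξ) (hψ : MemLp ψ 2 μ) {c : ℝ} (hc : 0 ≤ c)
    (hFψ : F ψ ≤ ENNReal.ofReal c) :
    ∫ x, ξ x * (ψ x - φ x) ∂μ ≤ c := by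
  have hsub := h.2.2 ψ hψ (ne_top_of_le_ne_top ENNReal.ofReal_ne_top hFψ)
  linarith [ENNReal.toReal_nonneg (a := F φ), ENNReal.toReal_le_of_le_ofReal hc hFψ]

theorem ae_abs_le_of_tendsto_eLpNorm {p : ℝ≥0∞} (hp : p ≠ 0) {f : ℕ → X → ℝ} {g : X → ℝ}
    (hf : ∀ n, AEStronglyMeasurable (f n) μ) (hg : AEStronglyMeasurable g μ)
    (hfg : Tendsto (fun n => eLpNorm (f n - g) p μ) atTop (nhds 0))
    {c : ℕ → ℝ} {c₀ : ℝ} (hc : Tendsto c atTop (nhds c₀)) (hfc : ∀ n, ∀ᵐ x ∂μ, |f n x| ≤ c n) :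
    ∀ᵐ x ∂μ, |g x| ≤ c₀ := by
  obtain ⟨ns, hns, hae⟩ :=
    (tendstoInMeasure_of_tendsto_eLpNorm hp hf hg hfg).exists_seq_tendsto_ae
  filter_upwards [hae, ae_all_iff.2 hfc] with x hx hxc
  exact le_of_tendsto_of_tendsto' hx.abs (hc.comp hns.tendsto_atTop) fun i => hxc (ns i)

theorem inner_toLp_eq_integral {f : X → ℝ} (hf : MemLp f 2 μ) (G : Lp ℝ 2 μ) :
    inner ℝ (hf.toLp f) G = ∫ x, f x * G x ∂μ := by
  rw [L2.inner_def]
  refine integral_congr_ae ?_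
  filter_upwards [hf.coeFn_toLp] with x hfx
  simp [hfx, mul_comm]

theorem integral_mul_coeFn_toLp {p : ℝ≥0∞} (b : X → ℝ) {f : X → ℝ} (hf : MemLp f p μ) :
    ∫ x, b x * hf.toLp f x ∂μ = ∫ x, b x * f x ∂μ :=
  integral_congr_ae (hf.coeFn_toLp.mono fun x hx => by simp only [hx])

theorem tendsto_integral_mul_of_weak_of_strong {b : ℕ → X → ℝ} {b₀ : X → ℝ}
    {f : ℕ → X → ℝ} {f₀ : X → ℝ} (hb : ∀ n, MemLp (b n) 2 μ)
    (hweak : ∀ g : X → ℝ, MemLp g 2 μ →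
      Tendsto (fun n => ∫ x, b n x * g x ∂μ) atTop (nhds (∫ x, b₀ x * g x ∂μ)))
    (hf : ∀ n, MemLp (f n) 2 μ) (hf₀ : MemLp f₀ 2 μ)
    (hstrong : Tendsto (fun n => eLpNorm (f n - f₀) 2 μ) atTop (nhds 0)) :
    Tendsto (fun n => ∫ x, b n x * f n x ∂μ) atTop (nhds (∫ x, b₀ x * f₀ x ∂μ)) := by
  have hlim := tendsto_apply_of_tendsto_pointwise
    (g := fun n => innerSL ℝ ((hb n).toLp (b n))) (ℓ := fun G : Lp ℝ 2 μ => ∫ x, b₀ x * G x ∂μ)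
    (fun G => by
      simpa only [innerSL_apply_apply, inner_toLp_eq_integral] using hweak G (Lp.memLp G))
    ((Lp.tendsto_Lp_iff_tendsto_eLpNorm'' f hf f₀ hf₀).mpr hstrong)
  simpa only [innerSL_apply_apply, inner_toLp_eq_integral, integral_mul_coeFn_toLp] using hlim

end

theorem isFiniteMeasure_Qmeasure {Ω : Set (EuclideanSpace ℝ (Fin 3))}
    (hΩ : Bornology.IsBounded Ω) (T' : ℝ) : IsFiniteMeasure (Qmeasure Ω T') :=
  isFiniteMeasure_restrict.mpr (hΩ.prod (Metric.isBounded_Ioo 0 T')).measure_lt_top.ne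

theorem stmt_4_general
    (T' : ℝ)
    (Ω : Set (EuclideanSpace ℝ (Fin 3)))
    (hΩb : Bornology.IsBounded Ω)
    (α : ℕ → ℝ) (hα : ∀ n, α n ∈ Set.Ioo (0 : ℝ) 1)
    (hα0 : Tendsto α atTop (nhds 0))
    (βn : ℕ → EuclideanSpace ℝ (Fin 3) × ℝ → ℝ)
    (β : EuclideanSpace ℝ (Fin 3) × ℝ → ℝ)
    (φn : ℕ → EuclideanSpace ℝ (Fin 3) × ℝ → ℝ)
    (φ : EuclideanSpace ℝ (Fin 3) × ℝ → ℝ)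
    (hφn : ∀ n, MemLp (φn n) 2 (Qmeasure Ω T')) (hφ : MemLp φ 2 (Qmeasure Ω T'))
    (hβweak : ∀ g : EuclideanSpace ℝ (Fin 3) × ℝ → ℝ, MemLp g 2 (Qmeasure Ω T') →
      Tendsto (fun n => ∫ x, βn n x * g x ∂(Qmeasure Ω T')) atTop
        (nhds (∫ x, β x * g x ∂(Qmeasure Ω T'))))
    (hφstrong : Tendsto (fun n => eLpNorm (fun x => φn n x - φ x) 2 (Qmeasure Ω T'))
      atTop (nhds 0))
    (hsub : ∀ n, MemSubdiff (Qmeasure Ω T') (Esg (Qmeasure Ω T') (α n)) (φn n) (βn n)) :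
    (∀ᵐ x ∂(Qmeasure Ω T'), |φ x| ≤ 1) ∧
    ∀ ψ : EuclideanSpace ℝ (Fin 3) × ℝ → ℝ, MemLp ψ 2 (Qmeasure Ω T') →
      (∀ᵐ x ∂(Qmeasure Ω T'), |ψ x| ≤ 1) →
      (∫ x, β x * (ψ x - φ x) ∂(Qmeasure Ω T')) ≤ 0 := by
  set μ := Qmeasure Ω T'
  have := isFiniteMeasure_Qmeasure hΩb T'
  refine ⟨ae_abs_le_of_tendsto_eLpNorm two_ne_zero (fun n => (hφn n).1) hφ.1 hφstrong
    (by simpa using hα0.const_add 1) fun n => ae_abs_le_of_Esg_ne_top (hsub n).2.1,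
    fun ψ hψ hψ1 => ?_⟩
  have hpair : Tendsto (fun n => ∫ x, βn n x * (ψ x - φn n x) ∂μ) atTop
      (nhds (∫ x, β x * (ψ x - φ x) ∂μ)) := by
    refine tendsto_integral_mul_of_weak_of_strong (fun n => (hsub n).1) hβweak
      (fun n => hψ.sub (hφn n)) (hψ.sub hφ) ?_
    refine hφstrong.congr fun n => ?_
    rw [← eLpNorm_neg]
    congr 1
    ext x
    simp only [Pi.sub_apply, Pi.neg_apply, sub_sub_sub_cancel_left, neg_sub]
  have hbound : ∀ n, ∫ x, βn n x * (ψ x - φn n x) ∂μ ≤ 6 * Real.log 3 * α n * μ.real univ :=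
    fun n => (hsub n).integral_mul_sub_le hψ (by have := (hα n).1; positivity)
      (Esg_le_of_ae_abs_le_one (hα n).1.le (hα n).2.le hψ1)
  refine le_of_tendsto_of_tendsto' hpair ?_ hbound
  simpa using (hα0.const_mul (6 * Real.log 3)).mul_const (μ.real univ)

/-- **Weak–strong closedness of subdifferentials as `α ↘ 0`.**
If `α_n ∈ (0,1)`, `α_n → 0`, `β_n ⇀ β` weakly in `L²(Q)`, `φ_n → φ` strongly in
`L²(Q)`, and `β_n ∈ ∂E_{sg,α_n}(φ_n)` for all `n`, then `β ∈ ∂I_K(φ)`: that is,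
`|φ| ≤ 1` a.e. in `Q` and `⟨β, ψ − φ⟩ ≤ 0` for every `ψ ∈ L²(Q)` with `|ψ| ≤ 1` a.e. -/
theorem stmt_4
    (T' : ℝ) (hT' : 0 < T')
    (Ω : Set (EuclideanSpace ℝ (Fin 3)))
    (hΩo : IsOpen Ω) (hΩc : IsConnected Ω) (hΩb : Bornology.IsBounded Ω)
    (α : ℕ → ℝ) (hα : ∀ n, α n ∈ Set.Ioo (0 : ℝ) 1)
    (hα0 : Tendsto α atTop (nhds 0))
    (βn : ℕ → EuclideanSpace ℝ (Fin 3) × ℝ → ℝ)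
    (β : EuclideanSpace ℝ (Fin 3) × ℝ → ℝ)
    (φn : ℕ → EuclideanSpace ℝ (Fin 3) × ℝ → ℝ)
    (φ : EuclideanSpace ℝ (Fin 3) × ℝ → ℝ)
    (hβn : ∀ n, MemLp (βn n) 2 (Qmeasure Ω T')) (hβ : MemLp β 2 (Qmeasure Ω T'))
    (hφn : ∀ n, MemLp (φn n) 2 (Qmeasure Ω T')) (hφ : MemLp φ 2 (Qmeasure Ω T'))
    (hβweak : ∀ g : EuclideanSpace ℝ (Fin 3) × ℝ → ℝ, MemLp g 2 (Qmeasure Ω T') →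
      Tendsto (fun n => ∫ x, βn n x * g x ∂(Qmeasure Ω T')) atTop
        (nhds (∫ x, β x * g x ∂(Qmeasure Ω T'))))
    (hφstrong : Tendsto (fun n => eLpNorm (fun x => φn n x - φ x) 2 (Qmeasure Ω T'))
      atTop (nhds 0))
    (hsub : ∀ n, MemSubdiff (Qmeasure Ω T') (Esg (Qmeasure Ω T') (α n)) (φn n) (βn n)) :
    (∀ᵐ x ∂(Qmeasure Ω T'), |φ x| ≤ 1) ∧
    ∀ ψ : EuclideanSpace ℝ (Fin 3) × ℝ → ℝ, MemLp ψ 2 (Qmeasure Ω T') →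
      (∀ᵐ x ∂(Qmeasure Ω T'), |ψ x| ≤ 1) →
      (∫ x, β x * (ψ x - φ x) ∂(Qmeasure Ω T')) ≤ 0 :=
  stmt_4_general T' Ω hΩb α hα hα0 βn β φn φ hφn hφ hβweak hφstrong hsub
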